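/- Let X be a finite set of at least three candidate architectures and n ≥ 1 stakeholders. Let A be a software architecture selection method, i.e., a function assigning an alternative A(r₁,…,rₙ) ∈ X to every profile of reported benefit functions rᵢ : X → ℝ with each rᵢ injective, and suppose A is onto X. If A is non-manipulable, i.e., for every stakeholder i, every profile r of injective benefit functions, and every injective function v : X → ℝ, it holds that v(A(r with i-th component replaced by v)) ≥ v(A(r)), then A is a dictatorship: there exists a stakeholder i such that for every profile r and every x ∈ X, rᵢ(A(r)) ≥ rᵢ(x), i.e., A always selects an architecture maximizing the reported benefit of stakeholder i, ignoring all other stakeholders' reports. -/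
import Mathlib

open Function

namespace GSaux

set_option linter.unusedSectionVars false

open scoped Classical

variable {X : Type*} [Fintype X]

/-- injective benefit function -/
abbrev Inj (p : X → ℝ) : Prop := Function.Injective p

def InjP {n : ℕ} (r : Fin n → X → ℝ) : Prop := ∀ j, Function.Injective (r j)

def SP {n : ℕ} (A : (Fin n → X → ℝ) → X) : Prop :=
  ∀ (i : Fin n) (r : Fin n → X → ℝ), (∀ j : Fin n, Function.Injective (r j)) →
    ∀ v : X → ℝ, Function.Injective v →
      v (A (Function.update r i v)) ≥ v (A r)

def Onto {n : ℕ} (A : (Fin n → X → ℝ) → X) : Prop :=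
  ∀ x : X, ∃ r : Fin n → X → ℝ, (∀ j : Fin n, Function.Injective (r j)) ∧ A r = x

def Dict {n : ℕ} (A : (Fin n → X → ℝ) → X) (i : Fin n) : Prop :=
  ∀ r : Fin n → X → ℝ, (∀ j : Fin n, Function.Injective (r j)) →
    ∀ x : X, r i (A r) ≥ r i x

/-- `x` is the strict top of `p` -/
def IsTop (p : X → ℝ) (x : X) : Prop := ∀ y, y ≠ x → p y < p x

/-- `x` beats everything except possibly `b` -/
def Sec (p : X → ℝ) (x b : X) : Prop := ∀ y, y ≠ x → y ≠ b → p y < p x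

lemma exists_max [Nonempty X] (p : X → ℝ) : ∃ x, ∀ y, p y ≤ p x := by
  obtain ⟨x, -, h⟩ := Finset.exists_max_image Finset.univ p
    ⟨Classical.arbitrary X, Finset.mem_univ _⟩
  exact ⟨x, fun y => h y (Finset.mem_univ y)⟩

lemma isTop_of_max {p : X → ℝ} (hp : Inj p) {t : X} (h : ∀ y, p y ≤ p t) : IsTop p t :=
  fun y hy => lt_of_le_of_ne (h y) (fun e => hy (hp e))

lemma exists_top [Nonempty X] {p : X → ℝ} (hp : Inj p) : ∃ t, IsTop p t := by
  obtain ⟨t, ht⟩ := exists_max p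
  exact ⟨t, isTop_of_max hp ht⟩

lemma eq_top_of_ge {p : X → ℝ} {t z : X} (ht : IsTop p t) (h : p t ≤ p z) : z = t := by
  by_contra hne
  exact absurd h (not_le.mpr (ht z hne))

/-- pointwise update of a benefit function -/
noncomputable def upd (p : X → ℝ) (a : X) (t : ℝ) : X → ℝ := fun y => if y = a then t else p y

@[simp] lemma upd_same (p : X → ℝ) (a : X) (t : ℝ) : upd p a t a = t := if_pos rfl

lemma upd_ne (p : X → ℝ) {y a : X} (h : y ≠ a) (t : ℝ) : upd p a t y = p y := if_neg h

lemma upd_inj {p : X → ℝ} (hp : Inj p) {a : X} {t : ℝ} (ht : ∀ y, p y ≠ t) :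
    Inj (upd p a t) := by
  intro y z h
  unfold upd at h
  by_cases hy : y = a <;> by_cases hz : z = a <;> simp [hy, hz] at h ⊢
  · exact absurd h.symm (ht z)
  · exact absurd h (ht y)
  · exact hp h

/-- a fixed injective embedding of `X` into `[0, card X)` -/
noncomputable def emb : X → ℝ := fun y => ((Fintype.equivFin X y : ℕ) : ℝ)

lemma emb_inj : Inj (emb (X := X)) := by
  intro y z h
  have : (Fintype.equivFin X y : ℕ) = (Fintype.equivFin X z : ℕ) := Nat.cast_injective h
  exact (Fintype.equivFin X).injective (Fin.val_injective this)

lemma emb_nonneg (y : X) : 0 ≤ emb y := Nat.cast_nonneg _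

lemma emb_lt (y : X) : emb y < (Fintype.card X : ℝ) := by
  have h := (Fintype.equivFin X y).isLt
  unfold emb
  exact_mod_cast h


section Builders

variable {X : Type*} [Fintype X]

/-- `card X` as a real -/
noncomputable def K (X : Type*) [Fintype X] : ℝ := (Fintype.card X : ℝ)

lemma emb_lt_K (y : X) : emb y < K X := emb_lt y

lemma K_nonneg : 0 ≤ K X := Nat.cast_nonneg _

/-- preference with `a` on top, `b` second, rest in base order -/
noncomputable def twoTop (a b : X) : X → ℝ := upd (upd emb b (K X)) a (K X + 1)

/-- preference with `a` on top, `b` at bottom, rest in base order -/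
noncomputable def topBot (a b : X) : X → ℝ := upd (upd emb b (-1)) a (K X)

/-- preference with `a` on top, rest in base order -/
noncomputable def top1 (a : X) : X → ℝ := upd emb a (K X)

lemma twoTop_a (a b : X) : twoTop a b a = K X + 1 := upd_same _ _ _

lemma twoTop_b {a b : X} (hab : a ≠ b) : twoTop a b b = K X := by
  rw [twoTop, upd_ne _ (Ne.symm hab), upd_same]

lemma twoTop_other {a b y : X} (hya : y ≠ a) (hyb : y ≠ b) : twoTop a b y = emb y := by
  rw [twoTop, upd_ne _ hya, upd_ne _ hyb]

lemma twoTop_inj {a b : X} (hab : a ≠ b) : Inj (twoTop a b) := by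
  have h1 : Inj (upd emb b (K X)) :=
    upd_inj emb_inj (fun y => ne_of_lt (emb_lt_K y))
  apply upd_inj h1
  intro y
  by_cases hy : y = b
  · subst hy; rw [upd_same]; intro h; linarith
  · rw [upd_ne _ hy]; exact ne_of_lt (by linarith [emb_lt_K y])

lemma twoTop_isTop {a b : X} (hab : a ≠ b) : IsTop (twoTop a b) a := by
  intro y hy
  rw [twoTop_a]
  by_cases hyb : y = b
  · subst hyb; rw [twoTop_b hab]; linarith
  · rw [twoTop_other hy hyb]; linarith [emb_lt_K y]

lemma twoTop_sec {a b : X} (hab : a ≠ b) : Sec (twoTop a b) b a := by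
  intro y hyb hya
  rw [twoTop_b hab, twoTop_other hya hyb]
  exact emb_lt_K y

lemma topBot_a (a b : X) : topBot a b a = K X := upd_same _ _ _

lemma topBot_b {a b : X} (hab : a ≠ b) : topBot a b b = -1 := by
  rw [topBot, upd_ne _ (Ne.symm hab), upd_same]

lemma topBot_other {a b y : X} (hya : y ≠ a) (hyb : y ≠ b) : topBot a b y = emb y := by
  rw [topBot, upd_ne _ hya, upd_ne _ hyb]

lemma topBot_ge {a b : X} (hab : a ≠ b) (y : X) : -1 ≤ topBot a b y := by
  by_cases hya : y = a
  · subst hya; rw [topBot_a]; linarith [K_nonneg (X := X)]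
  · by_cases hyb : y = b
    · subst hyb; rw [topBot_b hab]
    · rw [topBot_other hya hyb]; linarith [emb_nonneg y]

lemma topBot_inj {a b : X} (hab : a ≠ b) : Inj (topBot a b) := by
  have h1 : Inj (upd emb b (-1)) :=
    upd_inj emb_inj (fun y => ne_of_gt (by linarith [emb_nonneg y]))
  apply upd_inj h1
  intro y
  by_cases hy : y = b
  · subst hy; rw [upd_same]; intro h; linarith [K_nonneg (X := X)]
  · rw [upd_ne _ hy]; exact ne_of_lt (emb_lt_K y)

lemma topBot_isTop {a b : X} (hab : a ≠ b) : IsTop (topBot a b) a := by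
  intro y hy
  rw [topBot_a]
  by_cases hyb : y = b
  · subst hyb; rw [topBot_b hab]; linarith [K_nonneg (X := X)]
  · rw [topBot_other hy hyb]; exact emb_lt_K y

lemma top1_a (a : X) : top1 a a = K X := upd_same _ _ _

lemma top1_other {a y : X} (hya : y ≠ a) : top1 a y = emb y := upd_ne _ hya _

lemma top1_inj (a : X) : Inj (top1 (X := X) a) :=
  upd_inj emb_inj (fun y => ne_of_lt (emb_lt_K y))

lemma top1_isTop (a : X) : IsTop (top1 a) a := by
  intro y hy
  rw [top1_a, top1_other hy]
  exact emb_lt_K y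

end Builders

section SPLemmas

variable {X : Type*} [Fintype X] {n : ℕ} {A : (Fin n → X → ℝ) → X}

lemma injP_update {r : Fin n → X → ℝ} (hr : InjP r) {j : Fin n} {q : X → ℝ} (hq : Inj q) :
    InjP (Function.update r j q) := by
  intro k
  by_cases hk : k = j
  · subst hk; rw [Function.update_self]; exact hq
  · rw [Function.update_of_ne hk]; exact hr k

/-- single-coordinate monotonicity step -/
lemma step (hA : SP A) {r : Fin n → X → ℝ} (hr : InjP r) {x : X} (hx : A r = x)
    (j : Fin n) {q : X → ℝ} (hq : Inj q)
    (hcond : ∀ y, r j y < r j x → q y < q x) :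
    A (Function.update r j q) = x := by
  set r' := Function.update r j q with hr'def
  have hr' : InjP r' := injP_update hr hq
  have h1 : r j (A (Function.update r' j (r j))) ≥ r j (A r') := hA j r' hr' (r j) (hr j)
  have hrest : Function.update r' j (r j) = r := by
    rw [hr'def, Function.update_idem, Function.update_eq_self]
  rw [hrest, hx] at h1
  have h2 : q (A r') ≥ q (A r) := by
    have := hA j r hr q hq
    rwa [hr'def]
  rw [hx] at h2
  by_contra hne
  have hlt : r j (A r') < r j x := lt_of_le_of_ne h1 (fun e => hne ((hr j) e))
  have := hcond (A r') hlt
  linarith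

/-- strong monotonicity -/
lemma SM (hA : SP A) {r r' : Fin n → X → ℝ} (hr : InjP r) (hr' : InjP r')
    {x : X} (hx : A r = x)
    (hcond : ∀ j y, r j y < r j x → r' j y < r' j x) : A r' = x := by
  let h : ℕ → (Fin n → X → ℝ) := fun k j => if (j : ℕ) < k then r' j else r j
  have hinj : ∀ k, InjP (h k) := by
    intro k j
    by_cases hc : (j : ℕ) < k
    · simpa [h, hc] using hr' j
    · simpa [h, hc] using hr j
  have key : ∀ k, A (h k) = x := by
    intro k
    induction k with
    | zero => simpa [h] using hx
    | succ k ih =>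
      by_cases hk : k < n
      · have hupd : h (k + 1) = Function.update (h k) ⟨k, hk⟩ (r' ⟨k, hk⟩) := by
          funext j
          by_cases hj : j = ⟨k, hk⟩
          · subst hj; simp [h]
          · have hjk : (j : ℕ) ≠ k := by
              intro e; exact hj (Fin.ext e)
            rw [Function.update_of_ne hj]
            simp only [h]
            have : (j : ℕ) < k + 1 ↔ (j : ℕ) < k := by omega
            rw [if_congr this rfl rfl]
        rw [hupd]
        apply step hA (hinj k) ih ⟨k, hk⟩ (hr' _)
        intro y hy
        have hcoord : h k ⟨k, hk⟩ = r ⟨k, hk⟩ := by simp [h]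
        rw [hcoord] at hy
        exact hcond _ y hy
      · have : h (k + 1) = h k := by
          funext j
          have hj := j.isLt
          simp only [h]
          have h1 : (j : ℕ) < k + 1 := by omega
          have h2 : (j : ℕ) < k := by omega
          rw [if_pos h1, if_pos h2]
        rw [this]; exact ih
  have hfin : h n = r' := by
    funext j
    simp [h, j.isLt]
  rw [← hfin]; exact key n

lemma unanimity (hA : SP A) (hO : Onto A) {r : Fin n → X → ℝ} (hr : InjP r)
    {x : X} (hx : ∀ j, IsTop (r j) x) : A r = x := by
  obtain ⟨s, hs, hsx⟩ := hO x
  apply SM hA hs hr hsx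
  intro j y hy
  by_cases hyx : y = x
  · subst hyx; exact absurd hy (lt_irrefl _)
  · exact hx j y hyx

/-- maximum value of a benefit function -/
noncomputable def Mx [Nonempty X] (p : X → ℝ) : ℝ :=
  Finset.univ.sup' (Finset.univ_nonempty) p

lemma le_Mx [Nonempty X] (p : X → ℝ) (y : X) : p y ≤ Mx p :=
  Finset.le_sup' p (Finset.mem_univ y)

lemma pareto [Nonempty X] (hA : SP A) (hO : Onto A) (hn : 0 < n)
    {r : Fin n → X → ℝ} (hr : InjP r) {a c : X} (h : ∀ j, r j c < r j a) :
    A r ≠ c := by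
  intro hc
  have hca : c ≠ a := by
    intro e
    exact absurd (h ⟨0, hn⟩) (by rw [e]; exact lt_irrefl _)
  let r' : Fin n → X → ℝ := fun j => upd (r j) a (Mx (r j) + 1)
  have hr' : InjP r' := by
    intro j
    exact upd_inj (hr j) (fun y => ne_of_lt (by linarith [le_Mx (r j) y]))
  have hrc : A r' = c := by
    apply SM hA hr hr' hc
    intro j y hy
    have hc' : r' j c = r j c := upd_ne _ hca _
    by_cases hya : y = a
    · subst hya; exact absurd hy (not_lt.mpr (le_of_lt (h j)))
    · have hyv : r' j y = r j y := upd_ne _ hya _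
      rw [hc', hyv]; exact hy
  have hra : A r' = a := by
    apply unanimity hA hO hr'
    intro j y hy
    have h1 : r' j a = Mx (r j) + 1 := upd_same _ _ _
    have h2 : r' j y = r j y := upd_ne _ hy _
    rw [h1, h2]
    linarith [le_Mx (r j) y]
  rw [hrc] at hra
  exact hca hra

end SPLemmas

section TwoVoter

variable {X : Type*} [Fintype X]

/-- voter `i` dictates outcome `b` whenever `b` is their top -/
def PD (A : (Fin 2 → X → ℝ) → X) (i : Fin 2) (b : X) : Prop :=
  ∀ r, InjP r → IsTop (r i) b → A r = b

def FF (A : (Fin 2 → X → ℝ) → X) (a b : X) : Prop :=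
  ∀ r, InjP r → IsTop (r 1) a → Sec (r 0) a b → A r = a

def GG (A : (Fin 2 → X → ℝ) → X) (a b : X) : Prop :=
  ∀ r, InjP r → IsTop (r 0) a → Sec (r 1) a b → A r = a

variable {A : (Fin 2 → X → ℝ) → X}

lemma pairL (hX : 3 ≤ Fintype.card X) (hSP : SP A) (hO : Onto A)
    {a b : X} (hab : a ≠ b) : PD A 0 b ∨ FF A a b := by
  haveI : Nonempty X := Fintype.card_pos_iff.mp (by omega)
  have hba : b ≠ a := hab.symm
  set P1 : Fin 2 → X → ℝ := fun j => if j = 0 then twoTop b a else topBot a b with hP1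
  have hP1inj : InjP P1 := by
    intro j
    by_cases hj : j = 0
    · simpa [P1, hj] using twoTop_inj hba
    · simpa [P1, hj] using topBot_inj hab
  have hP10 : P1 0 = twoTop b a := by simp [P1]
  have hP11 : P1 1 = topBot a b := by simp [P1]
  have hz2 : A P1 = a ∨ A P1 = b := by
    by_contra hcon
    push_neg at hcon
    obtain ⟨hza, hzb⟩ := hcon
    refine pareto (a := a) (c := A P1) hSP hO (by norm_num) hP1inj ?_ rfl
    intro j
    by_cases hj : j = 0
    · subst hj
      rw [hP10, twoTop_b hba, twoTop_other hzb hza]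
      exact emb_lt_K _
    · have hj1 : j = 1 := by omega
      subst hj1
      rw [hP11, topBot_a, topBot_other hza hzb]
      exact emb_lt_K _
  rcases hz2 with hza | hzb
  · right
    intro r hr htop hsec
    apply SM hSP hP1inj hr hza
    intro j y hy
    by_cases hj : j = 0
    · subst hj
      rw [hP10] at hy
      by_cases hya : y = a
      · subst hya; exact absurd hy (lt_irrefl _)
      · by_cases hyb : y = b
        · subst hyb
          rw [twoTop_a, twoTop_b hba] at hy
          linarith
        · exact hsec y hya hyb
    · have hj1 : j = 1 := by omega
      subst hj1
      by_cases hya : y = a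
      · subst hya; exact absurd hy (lt_irrefl _)
      · exact htop y hya
  · left
    intro r hr htop
    apply SM hSP hP1inj hr hzb
    intro j y hy
    by_cases hj : j = 0
    · subst hj
      by_cases hyb : y = b
      · subst hyb; exact absurd hy (lt_irrefl _)
      · exact htop y hyb
    · have hj1 : j = 1 := by omega
      subst hj1
      rw [hP11, topBot_b hab] at hy
      have := topBot_ge hab y
      linarith

/-- the voter-swapped two-voter rule -/
def swp : Fin 2 → Fin 2 := fun j => if j = 0 then 1 else 0

lemma swp_swp : ∀ j, swp (swp j) = j := by decide

def AT (A : (Fin 2 → X → ℝ) → X) : (Fin 2 → X → ℝ) → X := fun w => A (fun j => w (swp j))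

lemma AT_SP (hSP : SP A) : SP (AT A) := by
  intro i w hw v hv
  have hcomp : (fun j => (Function.update w i v) (swp j)) =
      Function.update (fun j => w (swp j)) (swp i) v := by
    funext j
    by_cases hj : j = swp i
    · have h1 : swp j = i := by rw [hj, swp_swp]
      rw [hj, Function.update_self, ← hj, h1, Function.update_self]
    · have h1 : swp j ≠ i := by
        intro e
        exact hj (by rw [← e, swp_swp])
      rw [Function.update_of_ne hj, Function.update_of_ne h1]
  show v (A _) ≥ v (A _)
  rw [hcomp]
  exact hSP (swp i) (fun j => w (swp j)) (fun j => hw (swp j)) v hv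

lemma AT_Onto (hO : Onto A) : Onto (AT A) := by
  intro x
  obtain ⟨s, hs, hsx⟩ := hO x
  refine ⟨fun j => s (swp j), fun j => hs (swp j), ?_⟩
  show A _ = x
  have : (fun j => s (swp (swp j))) = s := by funext j; rw [swp_swp]
  rw [this]
  exact hsx

lemma swp0 : swp 0 = 1 := rfl
lemma swp1 : swp 1 = 0 := rfl

lemma pairR (hX : 3 ≤ Fintype.card X) (hSP : SP A) (hO : Onto A)
    {a b : X} (hab : a ≠ b) : PD A 1 b ∨ GG A a b := by
  rcases pairL (A := AT A) hX (AT_SP hSP) (AT_Onto hO) hab with h | h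
  · left
    intro r hr htop
    have := h (fun j => r (swp j)) (fun j => hr (swp j)) (by simpa [swp] using htop)
    show A r = b
    rw [show r = (fun j => (fun j => r (swp j)) (swp j)) from by
      funext j; show r j = r (swp (swp j)); rw [swp_swp]]
    exact this
  · right
    intro r hr htop hsec
    have := h (fun j => r (swp j)) (fun j => hr (swp j)) (by simpa [swp] using htop)
      (by simpa [swp] using hsec)
    show A r = a
    rw [show r = (fun j => (fun j => r (swp j)) (swp j)) from by
      funext j; show r j = r (swp (swp j)); rw [swp_swp]]
    exact this

lemma conflict1 (hFF : FF A a b) (hGG : GG A b a) (hab : a ≠ b) : False := by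
  have hba : b ≠ a := hab.symm
  set W : Fin 2 → X → ℝ := fun j => if j = 0 then twoTop b a else twoTop a b with hW
  have hWinj : InjP W := by
    intro j
    by_cases hj : j = 0
    · simpa [W, hj] using twoTop_inj hba
    · simpa [W, hj] using twoTop_inj hab
  have hW0 : W 0 = twoTop b a := by simp [W]
  have hW1 : W 1 = twoTop a b := by simp [W]
  have ha : A W = a := by
    apply hFF W hWinj
    · rw [hW1]; exact twoTop_isTop hab
    · rw [hW0]; exact twoTop_sec hba
  have hb : A W = b := by
    apply hGG W hWinj
    · rw [hW0]; exact twoTop_isTop hba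
    · rw [hW1]; exact twoTop_sec hab
  rw [ha] at hb
  exact hab hb

lemma conflict2 (h0 : PD A 0 b) (h1 : PD A 1 a) (hab : a ≠ b) : False := by
  set r : Fin 2 → X → ℝ := fun j => if j = 0 then top1 b else top1 a with hr
  have hrinj : InjP r := by
    intro j
    by_cases hj : j = 0
    · simpa [r, hj] using top1_inj b
    · simpa [r, hj] using top1_inj a
  have hb : A r = b := h0 r hrinj (by simp [r]; exact top1_isTop b)
  have ha : A r = a := h1 r hrinj (by simp [r]; exact top1_isTop a)
  rw [hb] at ha
  exact hab ha.symm

lemma exists_third (hX : 3 ≤ Fintype.card X) (a b : X) : ∃ c, c ≠ a ∧ c ≠ b := by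
  classical
  by_contra h
  push_neg at h
  have hsub : (Finset.univ : Finset X) ⊆ {a, b} := by
    intro c _
    rcases Classical.em (c = a) with h1 | h1
    · simp [h1]
    · simp [h c h1]
  have := Finset.card_le_card hsub
  rw [Finset.card_univ] at this
  have h2 : ({a, b} : Finset X).card ≤ 2 := by
    apply le_trans (Finset.card_insert_le _ _)
    simp
  omega

lemma GS2 (hX : 3 ≤ Fintype.card X) (hSP : SP A) (hO : Onto A) :
    ∃ i : Fin 2, Dict A i := by
  haveI : Nonempty X := Fintype.card_pos_iff.mp (by omega)
  by_cases hb : ∃ b, PD A 0 b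
  · obtain ⟨b, hbPD⟩ := hb
    have claim : ∀ y, PD A 0 y := by
      intro y
      by_cases hyb : y = b
      · subst hyb; exact hbPD
      · obtain ⟨c, hcy, hcb⟩ := exists_third hX y b
        rcases pairL hX hSP hO hcy with h | hFF
        · exact h
        · rcases pairR hX hSP hO (Ne.symm hcy) with h | hGG
          · exact absurd trivial (fun _ => conflict2 hbPD h hcb)
          · exact absurd trivial (fun _ => conflict1 hFF hGG hcy)
    refine ⟨0, ?_⟩
    intro r hr x
    obtain ⟨t, ht⟩ := exists_top (hr 0)
    rw [claim t r hr ht]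
    by_cases hx : x = t
    · rw [hx]
    · exact le_of_lt (ht x hx)
  · push_neg at hb
    have claim : ∀ y, PD A 1 y := by
      intro y
      obtain ⟨c, hcy, -⟩ := exists_third hX y y
      rcases pairR hX hSP hO hcy with h | hGG
      · exact h
      · rcases pairL hX hSP hO (Ne.symm hcy) with h | hFF
        · exact absurd h (hb c)
        · exact absurd trivial (fun _ => conflict1 hFF hGG (Ne.symm hcy))
    refine ⟨1, ?_⟩
    intro r hr x
    obtain ⟨t, ht⟩ := exists_top (hr 1)
    rw [claim t r hr ht]
    by_cases hx : x = t
    · rw [hx]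
    · exact le_of_lt (ht x hx)

end TwoVoter

section StepHelpers

variable {X : Type*} [Fintype X] {n : ℕ}

/-- duplicate voter 0: voters 0 and 1 of the big profile both get `r 0` -/
noncomputable def dup (hn : 0 < n) (r : Fin n → X → ℝ) : Fin (n + 1) → X → ℝ :=
  fun i => r ⟨(i : ℕ) - 1, by omega⟩

/-- plug `u` at coordinate 0, `v` at coordinate 1 of `t` -/
noncomputable def Pfun (u v : X → ℝ) (t : Fin (n + 1) → X → ℝ) : Fin (n + 1) → X → ℝ :=
  fun i => if (i : ℕ) = 0 then u else if (i : ℕ) = 1 then v else t i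

lemma Pfun_at0 {u v : X → ℝ} {t : Fin (n+1) → X → ℝ} {i : Fin (n+1)} (hi : (i : ℕ) = 0) :
    Pfun u v t i = u := by simp [Pfun, hi]

lemma Pfun_at1 {u v : X → ℝ} {t : Fin (n+1) → X → ℝ} {i : Fin (n+1)} (hi : (i : ℕ) = 1) :
    Pfun u v t i = v := by simp [Pfun, hi]

lemma Pfun_ge2 {u v : X → ℝ} {t : Fin (n+1) → X → ℝ} {i : Fin (n+1)} (hi : 2 ≤ (i : ℕ)) :
    Pfun u v t i = t i := by
  have h0 : (i : ℕ) ≠ 0 := by omega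
  have h1 : (i : ℕ) ≠ 1 := by omega
  simp [Pfun, h0, h1]

lemma Pfun_injP {u v : X → ℝ} {t : Fin (n+1) → X → ℝ}
    (hu : Inj u) (hv : Inj v) (ht : InjP t) : InjP (Pfun u v t) := by
  intro i
  rcases Nat.lt_or_ge (i : ℕ) 2 with h | h
  · have h01 : (i : ℕ) = 0 ∨ (i : ℕ) = 1 := by omega
    rcases h01 with h0 | h1
    · rw [Pfun_at0 h0]; exact hu
    · rw [Pfun_at1 h1]; exact hv
  · rw [Pfun_ge2 h]; exact ht i

lemma dup_injP {r : Fin n → X → ℝ} (hn : 0 < n) (hr : InjP r) : InjP (dup hn r) :=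
  fun _ => hr _

/-- merging voter 0 of the small profile into coordinates 0,1 of the big profile -/
lemma dup_eq_Pfun (hn : 0 < n) (p : X → ℝ) (t : Fin (n+1) → X → ℝ) :
    dup hn (fun j : Fin n => if (j : ℕ) = 0 then p else t ⟨(j : ℕ) + 1, by omega⟩) =
      Pfun p p t := by
  funext i
  show (if ((⟨(i : ℕ) - 1, by omega⟩ : Fin n) : ℕ) = 0 then p
      else t ⟨((⟨(i : ℕ) - 1, by omega⟩ : Fin n) : ℕ) + 1, by omega⟩) = Pfun p p t i
  rcases Nat.lt_or_ge (i : ℕ) 2 with h | h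
  · have hv : (i : ℕ) - 1 = 0 := by omega
    have h01 : (i : ℕ) = 0 ∨ (i : ℕ) = 1 := by omega
    rcases h01 with h0 | h1
    · rw [Pfun_at0 h0]; simp [hv]
    · rw [Pfun_at1 h1]; simp [hv]
  · have hv : ¬ ((i : ℕ) - 1 = 0) := by omega
    rw [Pfun_ge2 h]
    simp only [hv, if_false]
    have he : (⟨(i : ℕ) - 1 + 1, by omega⟩ : Fin (n+1)) = i := by
      apply Fin.ext
      show (i : ℕ) - 1 + 1 = (i : ℕ)
      omega
    rw [he]

end StepHelpers

section Mfun

variable {X : Type*} [Fintype X]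

lemma K_pos [Nonempty X] : 0 < K X := by
  have : 0 < Fintype.card X := Fintype.card_pos
  unfold K
  exact_mod_cast this

/-- an injective benefit function whose `x0`-beaten set is contained in the common
beaten set of `p` and `q` -/
noncomputable def mfun (p q : X → ℝ) (x0 : X) : X → ℝ := fun y =>
  if y = x0 then emb x0
  else if p y < p x0 ∧ q y < q x0 then emb y - 2 * K X
  else emb y + 2 * K X

lemma mfun_inj [Nonempty X] (p q : X → ℝ) (x0 : X) : Inj (mfun p q x0) := by
  have hK : 0 < K X := K_pos
  intro y z h
  unfold mfun at h
  by_cases hy : y = x0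
  · by_cases hz : z = x0
    · rw [hy, hz]
    · rw [if_pos hy, if_neg hz] at h
      by_cases hSz : p z < p x0 ∧ q z < q x0
      · rw [if_pos hSz] at h
        have := emb_nonneg x0; have := emb_lt_K z; linarith
      · rw [if_neg hSz] at h
        have := emb_lt_K x0; have := emb_nonneg z; linarith
  · by_cases hz : z = x0
    · rw [if_neg hy, if_pos hz] at h
      by_cases hSy : p y < p x0 ∧ q y < q x0
      · rw [if_pos hSy] at h
        have := emb_nonneg x0; have := emb_lt_K y; linarith
      · rw [if_neg hSy] at h
        have := emb_lt_K x0; have := emb_nonneg y; linarith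
    · rw [if_neg hy, if_neg hz] at h
      by_cases hSy : p y < p x0 ∧ q y < q x0
      · by_cases hSz : p z < p x0 ∧ q z < q x0
        · rw [if_pos hSy, if_pos hSz] at h
          exact emb_inj (by linarith)
        · rw [if_pos hSy, if_neg hSz] at h
          have := emb_lt_K y; have := emb_nonneg z; linarith
      · by_cases hSz : p z < p x0 ∧ q z < q x0
        · rw [if_neg hSy, if_pos hSz] at h
          have := emb_nonneg y; have := emb_lt_K z; linarith
        · rw [if_neg hSy, if_neg hSz] at h
          exact emb_inj (by linarith)

lemma mfun_beaten [Nonempty X] {p q : X → ℝ} {x0 y : X}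
    (h : mfun p q x0 y < mfun p q x0 x0) : p y < p x0 ∧ q y < q x0 := by
  have hK : 0 < K X := K_pos
  unfold mfun at h
  rw [if_pos rfl] at h
  by_cases hy : y = x0
  · rw [if_pos hy] at h
    exact absurd h (lt_irrefl _)
  · rw [if_neg hy] at h
    by_cases hS : p y < p x0 ∧ q y < q x0
    · exact hS
    · rw [if_neg hS] at h
      have := emb_lt_K x0; have := emb_nonneg y; linarith

end Mfun

section StepEqs

variable {X : Type*} [Fintype X] {n : ℕ}

lemma fin_ne_of_val {m : ℕ} {a b : Fin m} (h : (a : ℕ) ≠ (b : ℕ)) : a ≠ b :=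
  fun e => h (congrArg Fin.val e)

lemma dup_update0 (hn : 0 < n) (r : Fin n → X → ℝ) (v : X → ℝ) :
    dup hn (Function.update r ⟨0, hn⟩ v) =
      Function.update (Function.update (dup hn r) ⟨1, by omega⟩ v) ⟨0, by omega⟩ v := by
  funext i
  show (Function.update r ⟨0, hn⟩ v) ⟨(i : ℕ) - 1, by omega⟩ = _
  rw [Function.update_apply, Function.update_apply, Function.update_apply]
  rcases Nat.lt_or_ge (i : ℕ) 2 with h | h
  · have hcond : (⟨(i : ℕ) - 1, by omega⟩ : Fin n) = ⟨0, hn⟩ :=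
      Fin.ext (show (i : ℕ) - 1 = 0 by omega)
    rw [if_pos hcond]
    have h01 : (i : ℕ) = 0 ∨ (i : ℕ) = 1 := by omega
    rcases h01 with h0 | h1
    · have e0 : i = (⟨0, by omega⟩ : Fin (n+1)) := Fin.ext (show (i : ℕ) = 0 from h0)
      rw [if_pos e0]
    · have e0 : i ≠ (⟨0, by omega⟩ : Fin (n+1)) :=
        fin_ne_of_val (show (i : ℕ) ≠ 0 by omega)
      have e1 : i = (⟨1, by omega⟩ : Fin (n+1)) := Fin.ext (show (i : ℕ) = 1 from h1)
      rw [if_neg e0, if_pos e1]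
  · have c1 : (⟨(i : ℕ) - 1, by omega⟩ : Fin n) ≠ ⟨0, hn⟩ :=
      fin_ne_of_val (show (i : ℕ) - 1 ≠ 0 by omega)
    have c2 : i ≠ (⟨0, by omega⟩ : Fin (n+1)) := fin_ne_of_val (show (i : ℕ) ≠ 0 by omega)
    have c3 : i ≠ (⟨1, by omega⟩ : Fin (n+1)) := fin_ne_of_val (show (i : ℕ) ≠ 1 by omega)
    rw [if_neg c1, if_neg c2, if_neg c3]
    rfl

lemma dup_updateS (hn : 0 < n) (r : Fin n → X → ℝ) {j : Fin n} (hj : (j : ℕ) ≠ 0)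
    (v : X → ℝ) :
    dup hn (Function.update r j v) =
      Function.update (dup hn r) ⟨(j : ℕ) + 1, by omega⟩ v := by
  funext i
  show (Function.update r j v) ⟨(i : ℕ) - 1, by omega⟩ = _
  rw [Function.update_apply, Function.update_apply]
  by_cases hc : (i : ℕ) = (j : ℕ) + 1
  · have c1 : (⟨(i : ℕ) - 1, by omega⟩ : Fin n) = j :=
      Fin.ext (show (i : ℕ) - 1 = (j : ℕ) by omega)
    have c2 : i = (⟨(j : ℕ) + 1, by omega⟩ : Fin (n+1)) :=
      Fin.ext (show (i : ℕ) = (j : ℕ) + 1 from hc)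
    rw [if_pos c1, if_pos c2]
  · have c1 : (⟨(i : ℕ) - 1, by omega⟩ : Fin n) ≠ j :=
      fin_ne_of_val (show (i : ℕ) - 1 ≠ (j : ℕ) by omega)
    have c2 : i ≠ (⟨(j : ℕ) + 1, by omega⟩ : Fin (n+1)) :=
      fin_ne_of_val (show (i : ℕ) ≠ (j : ℕ) + 1 from hc)
    rw [if_neg c1, if_neg c2]
    rfl

lemma Pfun_update_w (u v : X → ℝ) (t : Fin (n+1) → X → ℝ) {k : Fin (n+1)}
    (hk : 2 ≤ (k : ℕ)) (w : X → ℝ) :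
    Pfun u v (Function.update t k w) = Function.update (Pfun u v t) k w := by
  funext i
  rw [Function.update_apply]
  by_cases hik : i = k
  · subst hik
    rw [if_pos rfl, Pfun_ge2 hk, Function.update_self]
  · rw [if_neg hik]
    rcases Nat.lt_or_ge (i : ℕ) 2 with h | h
    · have h01 : (i : ℕ) = 0 ∨ (i : ℕ) = 1 := by omega
      rcases h01 with h0 | h1
      · rw [Pfun_at0 h0, Pfun_at0 h0]
      · rw [Pfun_at1 h1, Pfun_at1 h1]
    · rw [Pfun_ge2 h, Pfun_ge2 h, Function.update_of_ne hik]

lemma Pfun_update0 (u v : X → ℝ) (t : Fin (n+1) → X → ℝ) (v' : X → ℝ) :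
    Pfun v' v t = Function.update (Pfun u v t) ⟨0, by omega⟩ v' := by
  funext i
  rw [Function.update_apply]
  by_cases h0 : (i : ℕ) = 0
  · have e0 : i = (⟨0, by omega⟩ : Fin (n+1)) := Fin.ext (show (i : ℕ) = 0 from h0)
    rw [Pfun_at0 h0, if_pos e0]
  · have e0 : i ≠ (⟨0, by omega⟩ : Fin (n+1)) := fin_ne_of_val (show (i : ℕ) ≠ 0 from h0)
    rw [if_neg e0]
    rcases Nat.lt_or_ge (i : ℕ) 2 with h | h
    · have h1 : (i : ℕ) = 1 := by omega
      rw [Pfun_at1 h1, Pfun_at1 h1]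
    · rw [Pfun_ge2 h, Pfun_ge2 h]

lemma Pfun_update1 (hn : 0 < n) (u v : X → ℝ) (t : Fin (n+1) → X → ℝ) (v' : X → ℝ) :
    Pfun u v' t = Function.update (Pfun u v t) ⟨1, by omega⟩ v' := by
  funext i
  rw [Function.update_apply]
  by_cases h1 : (i : ℕ) = 1
  · have e1 : i = (⟨1, by omega⟩ : Fin (n+1)) := Fin.ext (show (i : ℕ) = 1 from h1)
    rw [Pfun_at1 h1, if_pos e1]
  · have e1 : i ≠ (⟨1, by omega⟩ : Fin (n+1)) := fin_ne_of_val (show (i : ℕ) ≠ 1 from h1)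
    rw [if_neg e1]
    by_cases h0 : (i : ℕ) = 0
    · rw [Pfun_at0 h0, Pfun_at0 h0]
    · have h : 2 ≤ (i : ℕ) := by omega
      rw [Pfun_ge2 h, Pfun_ge2 h]

lemma Pfun_self (hn : 0 < n) (t : Fin (n+1) → X → ℝ) :
    Pfun (t ⟨0, by omega⟩) (t ⟨1, by omega⟩) t = t := by
  funext i
  by_cases h0 : (i : ℕ) = 0
  · rw [Pfun_at0 h0]
    have e0 : (⟨0, by omega⟩ : Fin (n+1)) = i := (Fin.ext (show (i : ℕ) = 0 from h0)).symm
    rw [e0]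
  · by_cases h1 : (i : ℕ) = 1
    · rw [Pfun_at1 h1]
      have e1 : (⟨1, by omega⟩ : Fin (n+1)) = i := (Fin.ext (show (i : ℕ) = 1 from h1)).symm
      rw [e1]
    · exact Pfun_ge2 (by omega)

lemma Pfun_eq_of_hi {u v : X → ℝ} {t t' : Fin (n+1) → X → ℝ}
    (h : ∀ i : Fin (n+1), 2 ≤ (i : ℕ) → t i = t' i) : Pfun u v t = Pfun u v t' := by
  funext i
  by_cases h0 : (i : ℕ) = 0
  · rw [Pfun_at0 h0, Pfun_at0 h0]
  · by_cases h1 : (i : ℕ) = 1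
    · rw [Pfun_at1 h1, Pfun_at1 h1]
    · have h2 : 2 ≤ (i : ℕ) := by omega
      rw [Pfun_ge2 h2, Pfun_ge2 h2, h i h2]

end StepEqs

section Step

variable {X : Type*} [Fintype X]

/-- voter 0 of the pair dictates, given the rest of the profile `t` -/
def PPz {n : ℕ} (A : (Fin (n+1) → X → ℝ) → X) (t : Fin (n+1) → X → ℝ) : Prop :=
  ∀ u v : X → ℝ, Inj u → Inj v → ∀ x, u (A (Pfun u v t)) ≥ u x

/-- voter 1 of the pair dictates, given the rest of the profile `t` -/
def PPo {n : ℕ} (A : (Fin (n+1) → X → ℝ) → X) (t : Fin (n+1) → X → ℝ) : Prop :=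
  ∀ u v : X → ℝ, Inj u → Inj v → ∀ x, v (A (Pfun u v t)) ≥ v x

lemma GSstep (hX : 3 ≤ Fintype.card X) {n : ℕ} (hn : 2 ≤ n)
    (IHn : ∀ An : (Fin n → X → ℝ) → X, SP An → Onto An → ∃ i, Dict An i)
    (A : (Fin (n + 1) → X → ℝ) → X) (hSP : SP A) (hO : Onto A) :
    ∃ i : Fin (n + 1), Dict A i := by
  haveI : Nonempty X := Fintype.card_pos_iff.mp (by omega)
  have hn0 : 0 < n := by omega
  -- the merged rule B
  have hBSP : SP (fun r : Fin n → X → ℝ => A (dup hn0 r)) := by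
    intro j r hr v hv
    by_cases hj : j = ⟨0, hn0⟩
    · subst hj
      show v (A (dup hn0 (Function.update r ⟨0, hn0⟩ v))) ≥ v (A (dup hn0 r))
      rw [dup_update0 hn0 r v]
      have h1 := hSP ⟨0, by omega⟩ (Function.update (dup hn0 r) ⟨1, by omega⟩ v)
        (injP_update (dup_injP hn0 hr) hv) v hv
      have h2 := hSP ⟨1, by omega⟩ (dup hn0 r) (dup_injP hn0 hr) v hv
      exact le_trans h2 h1
    · have hjv : (j : ℕ) ≠ 0 := fun e => hj (Fin.ext e)
      show v (A (dup hn0 (Function.update r j v))) ≥ v (A (dup hn0 r))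
      rw [dup_updateS hn0 r hjv v]
      exact hSP ⟨(j : ℕ) + 1, by omega⟩ (dup hn0 r) (dup_injP hn0 hr) v hv
  have hBO : Onto (fun r : Fin n → X → ℝ => A (dup hn0 r)) := by
    intro x
    refine ⟨fun _ => top1 x, fun _ => top1_inj x, ?_⟩
    exact unanimity hSP hO (fun _ => top1_inj x) (fun _ => top1_isTop x)
  obtain ⟨d, hd⟩ := IHn _ hBSP hBO
  haveI : Nontrivial X := Fintype.one_lt_card_iff_nontrivial.mp (by omega)
  obtain ⟨a, b, hab⟩ := exists_pair_ne X
  by_cases hd0 : d = ⟨0, hn0⟩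
  · -- merged pair is dictatorial: split it using the two-voter case
    have hMergeTop : ∀ (p : X → ℝ), Inj p → ∀ t : Fin (n+1) → X → ℝ, InjP t →
        ∀ x0, IsTop p x0 → A (Pfun p p t) = x0 := by
      intro p hp t ht x0 htop
      have hrri : InjP (fun j : Fin n =>
          if (j : ℕ) = 0 then p else t ⟨(j : ℕ) + 1, by omega⟩) := by
        intro j
        by_cases hj : (j : ℕ) = 0
        · simpa [hj] using hp
        · simpa [hj] using ht _
      have hmax := hd _ hrri x0
      rw [hd0] at hmax
      have h1 : p (A (dup hn0 (fun j : Fin n =>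
          if (j : ℕ) = 0 then p else t ⟨(j : ℕ) + 1, by omega⟩))) ≥ p x0 := by
        simpa using hmax
      have h2 := eq_top_of_ge htop h1
      rwa [dup_eq_Pfun hn0 p t] at h2
    have hC : ∀ t : Fin (n+1) → X → ℝ, InjP t → PPz A t ∨ PPo A t := by
      intro t ht
      have hCSP : SP (fun w : Fin 2 → X → ℝ => A (Pfun (w 0) (w 1) t)) := by
        intro i2 w hw v hv
        have hw0 : Inj (w 0) := hw 0
        have hw1 : Inj (w 1) := hw 1
        by_cases hi : i2 = 0
        · subst hi
          show v (A (Pfun ((Function.update w 0 v) 0) ((Function.update w 0 v) 1) t)) ≥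
            v (A (Pfun (w 0) (w 1) t))
          rw [Function.update_self, Function.update_of_ne (by decide : (1 : Fin 2) ≠ 0),
            Pfun_update0 (w 0) (w 1) t v]
          exact hSP ⟨0, by omega⟩ _ (Pfun_injP hw0 hw1 ht) v hv
        · have hlt := i2.isLt
          have hiv : (i2 : ℕ) ≠ 0 := fun e => hi (Fin.ext e)
          have hi1 : i2 = 1 := Fin.ext (show (i2 : ℕ) = 1 by omega)
          subst hi1
          show v (A (Pfun ((Function.update w 1 v) 0) ((Function.update w 1 v) 1) t)) ≥
            v (A (Pfun (w 0) (w 1) t))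
          rw [Function.update_self, Function.update_of_ne (by decide : (0 : Fin 2) ≠ 1),
            Pfun_update1 hn0 (w 0) (w 1) t v]
          exact hSP ⟨1, by omega⟩ _ (Pfun_injP hw0 hw1 ht) v hv
      have hCO : Onto (fun w : Fin 2 → X → ℝ => A (Pfun (w 0) (w 1) t)) := by
        intro x
        refine ⟨fun _ => top1 x, fun _ => top1_inj x, ?_⟩
        exact hMergeTop (top1 x) (top1_inj x) t ht x (top1_isTop x)
      obtain ⟨i2, hdict⟩ := GS2 hX hCSP hCO
      have build : ∀ u v : X → ℝ, Inj u → Inj v → ∀ x,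
          (fun j : Fin 2 => if j = 0 then u else v) i2
            (A (Pfun u v t)) ≥ (fun j : Fin 2 => if j = 0 then u else v) i2 x := by
        intro u v hu hv x
        have hIP : InjP (fun j : Fin 2 => if j = 0 then u else v) := by
          intro j
          by_cases hj : j = 0
          · simpa [hj] using hu
          · simpa [hj] using hv
        have h := hdict (fun j : Fin 2 => if j = 0 then u else v) hIP x
        have hCw : (fun w : Fin 2 → X → ℝ => A (Pfun (w 0) (w 1) t))
            (fun j : Fin 2 => if j = 0 then u else v) = A (Pfun u v t) := by
          show A (Pfun (if (0 : Fin 2) = 0 then u else v)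
            (if (1 : Fin 2) = 0 then u else v) t) = A (Pfun u v t)
          rw [if_pos rfl, if_neg (by decide : ¬ (1 : Fin 2) = 0)]
        rw [hCw] at h
        exact h
      by_cases hi : i2 = 0
      · left
        intro u v hu hv x
        have h := build u v hu hv x
        rw [hi] at h
        simpa using h
      · right
        have hlt := i2.isLt
        have hiv : (i2 : ℕ) ≠ 0 := fun e => hi (Fin.ext e)
        have hi1 : i2 = 1 := Fin.ext (show (i2 : ℕ) = 1 by omega)
        intro u v hu hv x
        have h := build u v hu hv x
        rw [hi1] at h
        simpa using h
    have hTrans0 : ∀ t, InjP t → PPz A t → ∀ (k : Fin (n+1)) (w : X → ℝ), Inj w →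
        PPz A (Function.update t k w) := by
      intro t ht h0 k w hw
      rcases Nat.lt_or_ge (k : ℕ) 2 with hk | hk
      · intro u v hu hv x
        have e : Pfun u v (Function.update t k w) = Pfun u v t :=
          Pfun_eq_of_hi (by
            intro i hi
            rw [Function.update_of_ne (fin_ne_of_val (show (i : ℕ) ≠ (k : ℕ) by omega))])
        rw [e]
        exact h0 u v hu hv x
      · by_cases hcon : PPz A (Function.update t k w)
        · exact hcon
        · exfalso
          have ht' : InjP (Function.update t k w) := injP_update ht hw
          have h1' : PPo A (Function.update t k w) := (hC _ ht').resolve_left hcon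
          have key : ∀ (u v : X → ℝ), Inj u → Inj v → ∀ xa xb, IsTop u xa → IsTop v xb →
              t k xa ≥ t k xb := by
            intro u v hu hv xa xb hta htb
            have e1 : A (Pfun u v t) = xa := eq_top_of_ge hta (h0 u v hu hv xa)
            have e2 : A (Pfun u v (Function.update t k w)) = xb :=
              eq_top_of_ge htb (h1' u v hu hv xb)
            have ePf : Pfun u v (Function.update t k w) =
                Function.update (Pfun u v t) k w := Pfun_update_w u v t hk w
            have hsp := hSP k (Function.update (Pfun u v t) k w)
              (injP_update (Pfun_injP hu hv ht) hw) (t k) (ht k)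
            have eid : Function.update (Function.update (Pfun u v t) k w) k (t k) =
                Pfun u v t := by
              rw [Function.update_idem,
                show t k = Pfun u v t k from (Pfun_ge2 hk).symm]
              exact Function.update_eq_self k (Pfun u v t)
            rw [eid, e1, ← ePf, e2] at hsp
            exact hsp
          have k1 := key (top1 a) (top1 b) (top1_inj a) (top1_inj b) a b
            (top1_isTop a) (top1_isTop b)
          have k2 := key (top1 b) (top1 a) (top1_inj b) (top1_inj a) b a
            (top1_isTop b) (top1_isTop a)
          exact hab (ht k (le_antisymm k2 k1))
    have hTrans1 : ∀ t, InjP t → PPo A t → ∀ (k : Fin (n+1)) (w : X → ℝ), Inj w →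
        PPo A (Function.update t k w) := by
      intro t ht h1 k w hw
      rcases Nat.lt_or_ge (k : ℕ) 2 with hk | hk
      · intro u v hu hv x
        have e : Pfun u v (Function.update t k w) = Pfun u v t :=
          Pfun_eq_of_hi (by
            intro i hi
            rw [Function.update_of_ne (fin_ne_of_val (show (i : ℕ) ≠ (k : ℕ) by omega))])
        rw [e]
        exact h1 u v hu hv x
      · by_cases hcon : PPo A (Function.update t k w)
        · exact hcon
        · exfalso
          have ht' : InjP (Function.update t k w) := injP_update ht hw
          have h0' : PPz A (Function.update t k w) := (hC _ ht').resolve_right hcon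
          have key : ∀ (u v : X → ℝ), Inj u → Inj v → ∀ xa xb, IsTop u xa → IsTop v xb →
              t k xb ≥ t k xa := by
            intro u v hu hv xa xb hta htb
            have e1 : A (Pfun u v t) = xb := eq_top_of_ge htb (h1 u v hu hv xb)
            have e2 : A (Pfun u v (Function.update t k w)) = xa :=
              eq_top_of_ge hta (h0' u v hu hv xa)
            have ePf : Pfun u v (Function.update t k w) =
                Function.update (Pfun u v t) k w := Pfun_update_w u v t hk w
            have hsp := hSP k (Function.update (Pfun u v t) k w)
              (injP_update (Pfun_injP hu hv ht) hw) (t k) (ht k)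
            have eid : Function.update (Function.update (Pfun u v t) k w) k (t k) =
                Pfun u v t := by
              rw [Function.update_idem,
                show t k = Pfun u v t k from (Pfun_ge2 hk).symm]
              exact Function.update_eq_self k (Pfun u v t)
            rw [eid, e1, ← ePf, e2] at hsp
            exact hsp
          have k1 := key (top1 a) (top1 b) (top1_inj a) (top1_inj b) a b
            (top1_isTop a) (top1_isTop b)
          have k2 := key (top1 b) (top1 a) (top1_inj b) (top1_inj a) b a
            (top1_isTop b) (top1_isTop a)
          exact hab (ht k (le_antisymm k1 k2))
    -- propagate P0 (resp. P1) from the base profile to all profiles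
    have hChain : ∀ (P : (Fin (n+1) → X → ℝ) → Prop),
        (∀ t, InjP t → P t → ∀ (k : Fin (n+1)) (w : X → ℝ), Inj w →
          P (Function.update t k w)) →
        P (fun _ => emb) → ∀ t, InjP t → P t := by
      intro P hTrans hbase t ht
      have key : ∀ k : ℕ,
          P (fun i => if (i : ℕ) < k then t i else emb) ∧
          InjP (fun i : Fin (n+1) => if (i : ℕ) < k then t i else emb) := by
        intro k
        induction k with
        | zero =>
          constructor
          · have e : (fun i : Fin (n+1) => if (i : ℕ) < 0 then t i else emb) =
                (fun _ => emb) := by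
              funext i; simp
            rw [e]; exact hbase
          · intro i; simpa using emb_inj
        | succ k ih =>
          by_cases hk : k < n + 1
          · have hupd : (fun i : Fin (n+1) => if (i : ℕ) < k + 1 then t i else emb) =
                Function.update (fun i : Fin (n+1) => if (i : ℕ) < k then t i else emb)
                  ⟨k, hk⟩ (t ⟨k, hk⟩) := by
              funext i
              rw [Function.update_apply]
              by_cases hik : i = ⟨k, hk⟩
              · subst hik
                rw [if_pos rfl, if_pos (show ((⟨k, hk⟩ : Fin (n+1)) : ℕ) < k + 1 by
                  show k < k + 1; omega)]
              · have hv : (i : ℕ) ≠ k := fun e => hik (Fin.ext e)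
                rw [if_neg hik]
                have hiff : ((i : ℕ) < k + 1) ↔ ((i : ℕ) < k) := by omega
                rw [if_congr hiff rfl rfl]
            constructor
            · rw [hupd]
              exact hTrans _ ih.2 ih.1 ⟨k, hk⟩ (t ⟨k, hk⟩) (ht _)
            · rw [hupd]
              exact injP_update ih.2 (ht _)
          · have e : (fun i : Fin (n+1) => if (i : ℕ) < k + 1 then t i else emb) =
                (fun i : Fin (n+1) => if (i : ℕ) < k then t i else emb) := by
              funext i
              have := i.isLt
              have hiff : ((i : ℕ) < k + 1) ↔ ((i : ℕ) < k) := by omega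
              rw [if_congr hiff rfl rfl]
            rw [e]; exact ih
      have hfin := (key (n + 1)).1
      have e : (fun i : Fin (n+1) => if (i : ℕ) < n + 1 then t i else emb) = t := by
        funext i
        rw [if_pos i.isLt]
      rwa [e] at hfin
    rcases hC (fun _ => emb) (fun _ => emb_inj) with h0 | h1
    · have hall := hChain (PPz A) hTrans0 h0
      refine ⟨⟨0, by omega⟩, ?_⟩
      intro R hR x
      have h := hall R hR (R ⟨0, by omega⟩) (R ⟨1, by omega⟩) (hR _) (hR _) x
      rwa [Pfun_self hn0 R] at h
    · have hall := hChain (PPo A) hTrans1 h1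
      refine ⟨⟨1, by omega⟩, ?_⟩
      intro R hR x
      have h := hall R hR (R ⟨0, by omega⟩) (R ⟨1, by omega⟩) (hR _) (hR _) x
      rwa [Pfun_self hn0 R] at h
  · -- an original voter dictates
    have hdv : (d : ℕ) ≠ 0 := fun e => hd0 (Fin.ext e)
    refine ⟨⟨(d : ℕ) + 1, by omega⟩, ?_⟩
    intro R hR x
    obtain ⟨x0, hx0⟩ := exists_top (hR ⟨(d : ℕ) + 1, by omega⟩)
    have hAR : A R = x0 := by
      have hmfi : Inj (mfun (R ⟨0, by omega⟩) (R ⟨1, by omega⟩) x0) := mfun_inj _ _ _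
      have hrri : InjP (fun j : Fin n => if (j : ℕ) = 0 then
          mfun (R ⟨0, by omega⟩) (R ⟨1, by omega⟩) x0 else R ⟨(j : ℕ) + 1, by omega⟩) := by
        intro j
        by_cases hj : (j : ℕ) = 0
        · simpa [hj] using hmfi
        · simpa [hj] using hR _
      have hmax := hd _ hrri x0
      have hmax' : R ⟨(d : ℕ) + 1, by omega⟩ (A (dup hn0 (fun j : Fin n =>
          if (j : ℕ) = 0 then mfun (R ⟨0, by omega⟩) (R ⟨1, by omega⟩) x0
          else R ⟨(j : ℕ) + 1, by omega⟩))) ≥ R ⟨(d : ℕ) + 1, by omega⟩ x0 := by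
        simpa [hdv] using hmax
      have hM : A (Pfun (mfun (R ⟨0, by omega⟩) (R ⟨1, by omega⟩) x0)
          (mfun (R ⟨0, by omega⟩) (R ⟨1, by omega⟩) x0) R) = x0 := by
        have h2 := eq_top_of_ge hx0 hmax'
        rwa [dup_eq_Pfun hn0 _ R] at h2
      apply SM hSP (Pfun_injP hmfi hmfi hR) hR hM
      intro i y hy
      rcases Nat.lt_or_ge (i : ℕ) 2 with h | h
      · have h01 : (i : ℕ) = 0 ∨ (i : ℕ) = 1 := by omega
        rcases h01 with h0 | h1
        · rw [Pfun_at0 h0] at hy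
          have e : i = (⟨0, by omega⟩ : Fin (n+1)) := Fin.ext h0
          rw [e]
          exact (mfun_beaten hy).1
        · rw [Pfun_at1 h1] at hy
          have e : i = (⟨1, by omega⟩ : Fin (n+1)) := Fin.ext h1
          rw [e]
          exact (mfun_beaten hy).2
      · rwa [Pfun_ge2 h] at hy
    rw [hAR]
    by_cases hx : x = x0
    · rw [hx]
    · exact le_of_lt (hx0 x hx)

end Step

section Main

variable {X : Type*} [Fintype X]

lemma GS1 [Nonempty X] {A : (Fin 1 → X → ℝ) → X} (hSP : SP A) (hO : Onto A) :
    ∃ i : Fin 1, Dict A i := by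
  refine ⟨0, ?_⟩
  intro r hr x
  obtain ⟨t, ht⟩ := exists_top (hr 0)
  have hAr : A r = t := by
    apply unanimity hSP hO hr
    intro j
    have hj : j = 0 := Subsingleton.elim j 0
    rw [hj]
    exact ht
  rw [hAr]
  by_cases hx : x = t
  · rw [hx]
  · exact le_of_lt (ht x hx)

theorem GSmain (hX : 3 ≤ Fintype.card X) :
    ∀ n, 1 ≤ n → ∀ A : (Fin n → X → ℝ) → X, SP A → Onto A → ∃ i, Dict A i := by
  haveI : Nonempty X := Fintype.card_pos_iff.mp (by omega)
  intro n
  induction n using Nat.strong_induction_on with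
  | _ n IH =>
    intro hn A hSP hO
    rcases n with _ | n1
    · omega
    · rcases n1 with _ | n2
      · exact GS1 hSP hO
      · rcases n2 with _ | m
        · exact GS2 hX hSP hO
        · exact GSstep hX (show 2 ≤ m + 2 by omega)
            (fun An h1 h2 => IH (m + 2) (by omega) (by omega) An h1 h2) A hSP hO

end Main

end GSaux



/-- Every onto, non-manipulable software architecture selection method on at least three
candidate architectures, with `n ≥ 1` stakeholders reporting injective benefit functions
`X → ℝ`, is a dictatorship: there is a stakeholder `i` such that the method always selects
an architecture maximizing `i`'s reported benefit. -/
theorem nonmanipulable_selection_is_dictatorship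
    {X : Type*} [Fintype X] {n : ℕ} (hn : 1 ≤ n) (hX : 3 ≤ Fintype.card X)
    (A : (Fin n → X → ℝ) → X)
    (honto : ∀ x : X, ∃ r : Fin n → X → ℝ,
      (∀ j : Fin n, Function.Injective (r j)) ∧ A r = x)
    (hnm : ∀ (i : Fin n) (r : Fin n → X → ℝ),
      (∀ j : Fin n, Function.Injective (r j)) →
      ∀ v : X → ℝ, Function.Injective v →
        v (A (Function.update r i v)) ≥ v (A r)) :
    ∃ i : Fin n, ∀ r : Fin n → X → ℝ,
      (∀ j : Fin n, Function.Injective (r j)) →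
      ∀ x : X, r i (A r) ≥ r i x := by
  obtain ⟨i, hi⟩ := GSaux.GSmain hX n hn A hnm honto
  exact ⟨i, hi⟩
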